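/- In the centipede game with 2n decision nodes (n ≥ 1), every subgame perfect behavioral profile yields root values V₁(0) = 2 and V₂(0) = 1; i.e., subgame perfection forces the outcome in which the game ends at the first node with payoffs (2, 1). -/
import Mathlib


/-- Payoff to player 1 if the game is stopped at node `t`
(player 1 is active at even `t`, player 2 at odd `t`). -/
noncomputable def stopPay1 (t : ℕ) : ℝ := if t % 2 = 0 then t + 2 else t

/-- Payoff to player 2 if the game is stopped at node `t`. -/
noncomputable def stopPay2 (t : ℕ) : ℝ := if t % 2 = 0 then t + 1 else t + 3

/-- Backward recursion auxiliary: `Vaux n p k` is the pair of continuation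
values of players 1 and 2 at node `2n - k`. -/
noncomputable def Vaux (n : ℕ) (p : ℕ → ℝ) : ℕ → ℝ × ℝ
  | 0 => (2 * n + 2, 2 * n + 1)
  | k + 1 =>
      (p (2 * n - (k + 1)) * stopPay1 (2 * n - (k + 1)) +
          (1 - p (2 * n - (k + 1))) * (Vaux n p k).1,
       p (2 * n - (k + 1)) * stopPay2 (2 * n - (k + 1)) +
          (1 - p (2 * n - (k + 1))) * (Vaux n p k).2)

/-- Continuation value of player 1 at node `t` (for `t ≤ 2n`). -/
noncomputable def V1 (n : ℕ) (p : ℕ → ℝ) (t : ℕ) : ℝ := (Vaux n p (2 * n - t)).1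

/-- Continuation value of player 2 at node `t` (for `t ≤ 2n`). -/
noncomputable def V2 (n : ℕ) (p : ℕ → ℝ) (t : ℕ) : ℝ := (Vaux n p (2 * n - t)).2

/-- Stop payoff of the active player at node `t`. -/
noncomputable def stopA (t : ℕ) : ℝ := if t % 2 = 0 then stopPay1 t else stopPay2 t

/-- Continuation value (at node `t + 1`) of the player who is active at node `t`. -/
noncomputable def contA (n : ℕ) (p : ℕ → ℝ) (t : ℕ) : ℝ :=
  if t % 2 = 0 then V1 n p (t + 1) else V2 n p (t + 1)

/-- A behavioral profile: `p t` is the probability of stopping at node `t`. -/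
def IsBehavioral (n : ℕ) (p : ℕ → ℝ) : Prop :=
  ∀ t < 2 * n, 0 ≤ p t ∧ p t ≤ 1

/-- `p` is subgame perfect: at every node the prescribed stop probability
maximizes the active player's continuation value. -/
def SubgamePerfect (n : ℕ) (p : ℕ → ℝ) : Prop :=
  IsBehavioral n p ∧
    ∀ t < 2 * n, ∀ q : ℝ, 0 ≤ q → q ≤ 1 →
      q * stopA t + (1 - q) * contA n p t ≤ p t * stopA t + (1 - p t) * contA n p t

lemma centipede_main_aux (n : ℕ) (p : ℕ → ℝ) (h : SubgamePerfect n p) :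
    ∀ k, k ≤ 2 * n → (Vaux n p k).1 = stopPay1 (2 * n - k) ∧
      (Vaux n p k).2 = stopPay2 (2 * n - k) := by
  intro k
  induction k with
  | zero =>
    intro _
    have hm : (2 * n - 0) % 2 = 0 := by omega
    simp only [Nat.sub_zero] at *
    rw [Vaux, stopPay1, stopPay2, if_pos hm, if_pos hm]
    constructor <;> push_cast <;> ring
  | succ k ih =>
    intro hk
    obtain ⟨ih1, ih2⟩ := ih (by omega)
    have ht1 : (2 * n - (k + 1)) + 1 = 2 * n - k := by omega
    have htlt : 2 * n - (k + 1) < 2 * n := by omega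
    have h2 : 2 * n - ((2 * n - (k + 1)) + 1) = k := by omega
    have hcont : contA n p (2 * n - (k + 1)) = stopA (2 * n - (k + 1)) - 1 := by
      rcases Nat.even_or_odd (2 * n - (k + 1)) with he | ho
      · have hm : (2 * n - (k + 1)) % 2 = 0 := Nat.even_iff.mp he
        have hm1 : ((2 * n - (k + 1)) + 1) % 2 = 1 := by omega
        rw [contA, stopA, if_pos hm, if_pos hm, V1, h2, ih1, ← ht1, stopPay1, if_neg (by omega),
          stopPay1, if_pos hm]
        push_cast
        ring
      · have hm : (2 * n - (k + 1)) % 2 = 1 := Nat.odd_iff.mp ho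
        have hm1 : ((2 * n - (k + 1)) + 1) % 2 = 0 := by omega
        rw [contA, stopA, if_neg (by omega), if_neg (by omega), V2, h2, ih2, ← ht1, stopPay2,
          if_pos hm1, stopPay2, if_neg (by omega)]
        push_cast
        ring
    have hb := h.1 _ htlt
    have hsgp := h.2 _ htlt 1 zero_le_one le_rfl
    rw [hcont] at hsgp
    have hp : p (2 * n - (k + 1)) = 1 := le_antisymm hb.2 (by nlinarith)
    simp [Vaux, hp]

/-- In the centipede game with `2n` decision nodes (`n ≥ 1`),
every subgame perfect behavioral profile yields root continuation values
`V₁(0) = 2` and `V₂(0) = 1`. -/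
theorem subgame_perfect_root_values (n : ℕ) (hn : 1 ≤ n) (p : ℕ → ℝ)
    (h : SubgamePerfect n p) : V1 n p 0 = 2 ∧ V2 n p 0 = 1 := by
  have := centipede_main_aux n p h (2 * n) le_rfl
  simp only [Nat.sub_self] at this
  rw [V1, V2, Nat.sub_zero]
  rw [this.1, this.2, stopPay1, stopPay2]
  norm_num
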